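/- Any 1-cell ξ : a → b in the n-th cube 𝒬(n) is of the form ξ = {f_1, ..., f_r} where either r = 0 and a = b, or r > 0 and f_1⁻ = {a}, f_i⁺ = f_{i+1}⁻ for 1 ≤ i < r, and f_r⁺ = {b}. -/
import Mathlib


/-- The three symbols `⊖`, `⊙`, `⊕`. -/
inductive CSym : Type
  | minus : CSym
  | mid : CSym
  | plus : CSym
deriving DecidableEq

/-- `Str n j` is `⟦n⟧_j`: strings of length `n` over `{⊖,⊙,⊕}` with exactly `j`
occurrences of `⊙`. -/
def Str (n j : ℕ) : Type := {l : List CSym // l.length = n ∧ l.count CSym.mid = j}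

/-- The odd face `f⁻` of `f ∈ ⟦n⟧_1`: replace the unique `⊙` by `⊖`. -/
def fneg {n : ℕ} (f : Str n 1) : Str n 0 :=
  ⟨f.1.map (fun s => if s = CSym.mid then CSym.minus else s), by
    refine ⟨by simp [f.2.1], ?_⟩
    rw [List.count_eq_zero]
    intro hmem
    rw [List.mem_map] at hmem
    obtain ⟨s, -, hs⟩ := hmem
    split at hs <;> simp_all⟩

/-- The even face `f⁺` of `f ∈ ⟦n⟧_1`: replace the unique `⊙` by `⊕`. -/
def fpos {n : ℕ} (f : Str n 1) : Str n 0 :=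
  ⟨f.1.map (fun s => if s = CSym.mid then CSym.plus else s), by
    refine ⟨by simp [f.2.1], ?_⟩
    rw [List.count_eq_zero]
    intro hmem
    rw [List.mem_map] at hmem
    obtain ⟨s, -, hs⟩ := hmem
    split at hs <;> simp_all⟩

/-- Well-formedness for a set of 1-dimensional cube elements: distinct elements
share no even face and no odd face. -/
def Wf1 {n : ℕ} (ξ : Set (Str n 1)) : Prop :=
  ∀ f ∈ ξ, ∀ g ∈ ξ, f ≠ g → fpos f ≠ fpos g ∧ fneg f ≠ fneg g

/-- `ξ` moves `a` to `b`. -/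
def Moves1 {n : ℕ} (ξ : Set (Str n 1)) (a b : Str n 0) : Prop :=
  ({b} : Set (Str n 0)) = ({a} ∪ fpos '' ξ) \ fneg '' ξ ∧
  ({a} : Set (Str n 0)) = ({b} ∪ fneg '' ξ) \ fpos '' ξ

/-- Append `⊖` to a string. -/
def appM {n j : ℕ} (a : Str n j) : Str (n+1) j :=
  ⟨a.1 ++ [CSym.minus], by
    refine ⟨by simp [a.2.1], ?_⟩
    simp [List.count_append, a.2.2, List.count_singleton]⟩

/-- Append `⊕` to a string. -/
def appP {n j : ℕ} (a : Str n j) : Str (n+1) j :=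
  ⟨a.1 ++ [CSym.plus], by
    refine ⟨by simp [a.2.1], ?_⟩
    simp [List.count_append, a.2.2, List.count_singleton]⟩

/-- Append `⊙` to a string. -/
def appO {n j : ℕ} (a : Str n j) : Str (n+1) (j+1) :=
  ⟨a.1 ++ [CSym.mid], by
    refine ⟨by simp [a.2.1], ?_⟩
    simp [List.count_append, a.2.2, List.count_singleton]⟩

/- ### Auxiliary material -/

instance : Fintype CSym :=
  ⟨{CSym.minus, CSym.mid, CSym.plus}, by intro x; cases x <;> simp⟩

instance strFinite (n j : ℕ) : Finite (Str n j) := by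
  apply Finite.of_injective (fun x : Str n j => fun i : Fin n => x.1.get (Fin.cast x.2.1.symm i))
  intro x y h
  apply Subtype.ext
  apply List.ext_get (by rw [x.2.1, y.2.1])
  intro i h1 h2
  have hx := x.2.1
  have hy := y.2.1
  exact congrFun h ⟨i, by omega⟩

/-- weight: number of `⊕` symbols. -/
def wt {n : ℕ} (x : Str n 0) : ℕ := x.1.count CSym.plus

lemma count_map_aux (l : List CSym) :
    (l.map (fun s => if s = CSym.mid then CSym.plus else s)).count CSym.plus
      = l.count CSym.plus + l.count CSym.mid ∧
    (l.map (fun s => if s = CSym.mid then CSym.minus else s)).count CSym.plus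
      = l.count CSym.plus := by
  induction l with
  | nil => simp
  | cons h t ih => cases h <;> simp [List.count_cons, ih.1, ih.2] <;> omega

lemma wt_fpos {n : ℕ} (f : Str n 1) : wt (fpos f) = wt (fneg f) + 1 := by
  have h := count_map_aux f.1
  simp only [wt, fpos, fneg, h.1, h.2, f.2.2]

/-- A propositional repackaging of `Moves1`. -/
def Nice {n : ℕ} (ξ : Set (Str n 1)) (a b : Str n 0) : Prop :=
  b ∉ fneg '' ξ ∧ a ∉ fpos '' ξ ∧ (b = a ∨ b ∈ fpos '' ξ) ∧ (a = b ∨ a ∈ fneg '' ξ) ∧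
  (fneg '' ξ) \ (fpos '' ξ) ⊆ {a} ∧ (fpos '' ξ) \ (fneg '' ξ) ⊆ {b}

lemma nice_of_moves1 {n : ℕ} {ξ : Set (Str n 1)} {a b : Str n 0}
    (h : Moves1 ξ a b) : Nice ξ a b := by
  obtain ⟨h1, h2⟩ := h
  have hb : b ∈ ({a} ∪ fpos '' ξ) \ fneg '' ξ := by rw [← h1]; exact rfl
  have ha : a ∈ ({b} ∪ fneg '' ξ) \ fpos '' ξ := by rw [← h2]; exact rfl
  refine ⟨hb.2, ha.2, ?_, ?_, ?_, ?_⟩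
  · rcases hb.1 with h | h
    · exact Or.inl h
    · exact Or.inr h
  · rcases ha.1 with h | h
    · exact Or.inl h
    · exact Or.inr h
  · intro x hx
    have : x ∈ ({b} ∪ fneg '' ξ) \ fpos '' ξ := ⟨Or.inr hx.1, hx.2⟩
    rw [← h2] at this
    exact this
  · intro x hx
    have : x ∈ ({a} ∪ fpos '' ξ) \ fneg '' ξ := ⟨Or.inr hx.1, hx.2⟩
    rw [← h1] at this
    exact this

/-- The main induction: a nonempty nice set is a chain. -/
lemma chain_of_nice {n : ℕ} : ∀ (k : ℕ) (ξ : Set (Str n 1)) (a b : Str n 0),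
    ξ.ncard ≤ k → Wf1 ξ → Nice ξ a b →
    (ξ = ∅ ∧ a = b) ∨
    ∃ (r : ℕ) (f : Fin (r+1) → Str n 1), Function.Injective f ∧ ξ = Set.range f ∧
      fneg (f 0) = a ∧ fpos (f (Fin.last r)) = b ∧
      ∀ t : Fin r, fpos (f t.castSucc) = fneg (f t.succ) := by
  intro k
  induction k with
  | zero =>
    intro ξ a b hk hwf hn
    have hξ : ξ = ∅ := by
      rw [← Set.ncard_eq_zero ξ.toFinite]; omega
    subst hξ
    left
    refine ⟨rfl, ?_⟩
    rcases hn.2.2.1 with h | h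
    · exact h.symm
    · simp at h
  | succ k ih =>
    intro ξ a b hk hwf hn
    obtain ⟨hbN, haP, hbP, haN, hNP, hPN⟩ := hn
    rcases Set.eq_empty_or_nonempty ξ with rfl | hne
    · left
      refine ⟨rfl, ?_⟩
      rcases hbP with h | h
      · exact h.symm
      · simp at h
    right
    -- first, a ≠ b
    have hab : a ≠ b := by
      intro hEq
      subst hEq
      -- then fneg '' ξ = fpos '' ξ, contradicting weight monotonicity
      have haN' : a ∉ fneg '' ξ := hbN
      have hsub1 : fneg '' ξ ⊆ fpos '' ξ := by
        intro x hx
        by_contra hxP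
        have := hNP ⟨hx, hxP⟩
        simp only [Set.mem_singleton_iff] at this
        subst this
        exact haN' hx
      have hsub2 : fpos '' ξ ⊆ fneg '' ξ := by
        intro x hx
        by_contra hxN
        have := hPN ⟨hx, hxN⟩
        simp only [Set.mem_singleton_iff] at this
        subst this
        exact haP hx
      obtain ⟨f, hf, hmax⟩ := Set.exists_max_image ξ (fun g => wt (fneg g)) ξ.toFinite hne
      have : fpos f ∈ fneg '' ξ := hsub2 ⟨f, hf, rfl⟩
      obtain ⟨g, hg, hgf⟩ := this
      have h1 : wt (fneg g) = wt (fneg f) + 1 := by rw [hgf, wt_fpos]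
      have h2 := hmax g hg
      omega
    -- a is a negative face
    have haN2 : a ∈ fneg '' ξ := by
      rcases haN with h | h
      · exact absurd h hab
      · exact h
    obtain ⟨f₀, hf₀, hf₀a⟩ := haN2
    set a' := fpos f₀ with ha'
    set ξ' := ξ \ {f₀} with hξ'
    have hsub : ξ' ⊆ ξ := Set.diff_subset
    have hwf' : Wf1 ξ' := fun f hf g hg hfg => hwf f (hsub hf) g (hsub hg) hfg
    have haa' : a ≠ a' := by
      intro h
      exact haP ⟨f₀, hf₀, (h ▸ rfl : fpos f₀ = a)⟩
    -- membership transfer lemmas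
    have hmemN' : ∀ x, x ∈ fneg '' ξ' → x ∈ fneg '' ξ := fun x ⟨g, hg, h⟩ => ⟨g, hsub hg, h⟩
    have hmemP' : ∀ x, x ∈ fpos '' ξ' → x ∈ fpos '' ξ := fun x ⟨g, hg, h⟩ => ⟨g, hsub hg, h⟩
    have haN'' : a ∉ fneg '' ξ' := by
      rintro ⟨g, hg, hga⟩
      exact (hwf g (hsub hg) f₀ hf₀ (fun h => hg.2 (by simp [h]))).2 (hga.trans hf₀a.symm)
    have ha'P' : a' ∉ fpos '' ξ' := by
      rintro ⟨g, hg, hga⟩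
      exact (hwf g (hsub hg) f₀ hf₀ (fun h => hg.2 (by simp [h]))).1 hga
    -- Nice for ξ', a', b
    have hn' : Nice ξ' a' b := by
      refine ⟨fun h => hbN (hmemN' b h), ha'P', ?_, ?_, ?_, ?_⟩
      · rcases hbP with h | h
        · exact absurd h.symm hab
        · obtain ⟨g, hg, hgb⟩ := h
          by_cases hgf : g = f₀
          · left; rw [← hgb, hgf]
          · right; exact ⟨g, ⟨hg, hgf⟩, hgb⟩
      · by_cases hb' : a' = b
        · exact Or.inl hb'
        right
        have ha'N : a' ∈ fneg '' ξ := by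
          by_contra h
          exact hb' (hPN ⟨⟨f₀, hf₀, rfl⟩, h⟩)
        obtain ⟨g, hg, hga⟩ := ha'N
        by_cases hgf : g = f₀
        · exfalso
          exact haa' (hf₀a.symm.trans (hgf ▸ hga))
        · exact ⟨g, ⟨hg, hgf⟩, hga⟩
      · intro x hx
        obtain ⟨hx1, hx2⟩ := hx
        by_cases hxa' : x = a'
        · exact hxa'
        exfalso
        have hxP : x ∉ fpos '' ξ := by
          rintro ⟨h, hh, hhx⟩
          by_cases hhf : h = f₀
          · subst hhf
            exact hxa' hhx.symm
          · exact hx2 ⟨h, ⟨hh, hhf⟩, hhx⟩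
        have : x = a := hNP ⟨hmemN' x hx1, hxP⟩
        subst this
        exact haN'' hx1
      · intro x hx
        obtain ⟨hx1, hx2⟩ := hx
        by_cases hxb : x = b
        · exact hxb
        exfalso
        have hxN : x ∈ fneg '' ξ := by
          by_contra h
          exact hxb (hPN ⟨hmemP' x hx1, h⟩)
        obtain ⟨g, hg, hgx⟩ := hxN
        by_cases hgf : g = f₀
        · subst hgf
          rw [hf₀a] at hgx
          subst hgx
          exact haP (hmemP' _ hx1)
        · exact hx2 ⟨g, ⟨hg, hgf⟩, hgx⟩
    have hk' : ξ'.ncard ≤ k := by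
      have h2 : ξ'.ncard < ξ.ncard := by
        rw [hξ']
        exact Set.ncard_diff_singleton_lt_of_mem hf₀ ξ.toFinite
      omega
    rcases ih ξ' a' b hk' hwf' hn' with ⟨hξ'e, hab'⟩ | ⟨r, f', hinj', hrange', hneg', hpos', hchain'⟩
    · -- ξ = {f₀}
      refine ⟨0, fun _ => f₀, ?_, ?_, ?_, ?_, ?_⟩
      · intro i j _
        have hi := i.2
        have hj := j.2
        ext
        omega
      · have : ξ = {f₀} := by
          apply Set.eq_of_subset_of_subset
          · intro g hg
            by_contra h
            exact (Set.eq_empty_iff_forall_notMem.1 hξ'e g) ⟨hg, h⟩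
          · intro g hg
            simp only [Set.mem_singleton_iff] at hg
            exact hg ▸ hf₀
        rw [this]
        ext g
        simp
      · exact hf₀a
      · exact hab'.symm ▸ rfl
      · intro t; exact absurd t.2 (by omega)
    · -- prepend f₀ to the chain
      have hf₀notξ' : f₀ ∉ ξ' := fun h => h.2 rfl
      refine ⟨r + 1, Fin.cons f₀ f', ?_, ?_, ?_, ?_, ?_⟩
      · rw [Fin.cons_injective_iff]
        exact ⟨fun hmem => hf₀notξ' (hrange' ▸ hmem), hinj'⟩
      · rw [Fin.range_cons, ← hrange', hξ', Set.insert_diff_singleton,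
          Set.insert_eq_of_mem hf₀]
      · rw [Fin.cons_zero]
        exact hf₀a
      · rw [← Fin.succ_last, Fin.cons_succ]
        exact hpos'
      · intro t
        induction t using Fin.cases with
        | zero =>
          rw [Fin.castSucc_zero, Fin.cons_zero, Fin.cons_succ]
          exact hneg'.symm
        | succ s =>
          rw [← Fin.succ_castSucc, Fin.cons_succ, Fin.cons_succ]
          exact hchain' s

/-- Classification of 1-cells of the cube `𝒬(n)`: every 1-cell `ξ : a → b` is
either empty (with `a = b`) or a chain `{f_1, …, f_r}` with `f_1⁻ = a`,
`f_i⁺ = f_{i+1}⁻` and `f_r⁺ = b`. -/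
theorem cube_one_cell_classification (n : ℕ) (a b : Str n 0) (ξ : Set (Str n 1))
    (hwf : Wf1 ξ) (hmv : Moves1 ξ a b) :
    (ξ = ∅ ∧ a = b) ∨
    ∃ (r : ℕ) (f : Fin (r+1) → Str n 1), Function.Injective f ∧ ξ = Set.range f ∧
      fneg (f 0) = a ∧ fpos (f (Fin.last r)) = b ∧
      ∀ t : Fin r, fpos (f t.castSucc) = fneg (f t.succ) := by
  exact chain_of_nice ξ.ncard ξ a b le_rfl hwf (nice_of_moves1 hmv)
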